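/- Let $X$ be a complex Banach space with norm such that conjugation is defined (a complexified space), and let $B = B(a; r)$ be an open ball with $\overline{B} \cap \overline{\mathrm{conj}(B)} = \emptyset$, so that $\|\Im a\| > r$. Let $V$ be a complexified Banach space, $u$ a function on $B \cup \mathrm{conj}(B)$ with Lipschitz constant $K > 0$ there, with $u \le 0$ on $X_\mathbb{R}$ (vacuously since $\overline B \cap X_\mathbb{R} = \emptyset$), and fix $x_0 = a$. Define $f(x) = \frac{|u(x_0)| + |u(\overline{x_0})| + Kr}{\|\Im x_0\| - r}\, x$. Then $f$ is complex linear, of real type, and $\|\Im f(x)\| \ge u(x)$ for all $x \in B \cup \mathrm{conj}(B)$. -/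

import Mathlib

/-!
Write `Im x = (x - x̄)/(2i)`, so that `‖Im x‖ = ‖x - x̄‖/2` and `Im` is `1`-Lipschitz. The closed
balls `B̄` and `conj(B̄) = B̄(ā; r)` both contain the midpoint of `a` and `ā` as soon as
`‖Im a‖ ≤ r`, so disjointness forces `‖Im a‖ > r`; hence `‖Im x‖ ≥ ‖Im a‖ - r > 0` on `B`, and
on `conj(B)` because `Im x̄ = -Im x`. On the other hand the Lipschitz bound gives
`u ≤ |u(a)| + |u(ā)| + Kr` on `B ∪ conj(B)`. Multiplication by the real scalar `c` commutes with
conjugation and scales `‖Im‖` by `c`, and `c` is chosen so that `c (‖Im a‖ - r)` is exactly that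
bound.
-/

/-- A conjugation on a complex Banach space `X`, exhibiting `X` as the
    complexification of its real subspace of fixed points: an additive,
    complex-antilinear, involutive isometry. -/
structure Conjugation (X : Type*) [NormedAddCommGroup X] [NormedSpace ℂ X] where
  toFun : X → X
  map_add : ∀ x y : X, toFun (x + y) = toFun x + toFun y
  map_smul : ∀ (c : ℂ) (x : X), toFun (c • x) = (starRingEnd ℂ c) • toFun x
  invol : ∀ x : X, toFun (toFun x) = x
  isom : ∀ x : X, ‖toFun x‖ = ‖x‖

theorem LipschitzOnWith.le_abs_add_abs_add_mul {α : Type*} [PseudoMetricSpace α] {u : α → ℝ}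
    {K : NNReal} {a b x : α} {r : ℝ} (hr : 0 < r)
    (hu : LipschitzOnWith K u (Metric.ball a r ∪ Metric.ball b r))
    (hx : x ∈ Metric.ball a r ∪ Metric.ball b r) :
    u x ≤ |u a| + |u b| + K * r := by
  have ha : a ∈ Metric.ball a r ∪ Metric.ball b r := Or.inl (Metric.mem_ball_self hr)
  have hb : b ∈ Metric.ball a r ∪ Metric.ball b r := Or.inr (Metric.mem_ball_self hr)
  rcases hx with hxa | hxb
  · have := hu.le_add_mul (Or.inl hxa) ha
    have : (K : ℝ) * dist x a ≤ K * r := by gcongr; exact (Metric.mem_ball.1 hxa).le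
    linarith [le_abs_self (u a), abs_nonneg (u b)]
  · have := hu.le_add_mul (Or.inr hxb) hb
    have : (K : ℝ) * dist x b ≤ K * r := by gcongr; exact (Metric.mem_ball.1 hxb).le
    linarith [le_abs_self (u b), abs_nonneg (u a)]

namespace Conjugation

variable {X : Type*} [NormedAddCommGroup X] [NormedSpace ℂ X] (σ : Conjugation X)

theorem map_sub (x y : X) : σ.toFun (x - y) = σ.toFun x - σ.toFun y := by
  rw [eq_sub_iff_add_eq, ← σ.map_add, sub_add_cancel]

theorem map_ofReal_smul (c : ℝ) (x : X) : σ.toFun ((c : ℂ) • x) = (c : ℂ) • σ.toFun x := by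
  rw [σ.map_smul, Complex.conj_ofReal]

theorem dist_map (x y : X) : dist (σ.toFun x) (σ.toFun y) = dist x y := by
  rw [dist_eq_norm, dist_eq_norm, ← σ.map_sub, σ.isom]

theorem image_ball (a : X) (r : ℝ) :
    σ.toFun '' Metric.ball a r = Metric.ball (σ.toFun a) r := by
  ext z
  constructor
  · rintro ⟨y, hy, rfl⟩
    rwa [Metric.mem_ball, σ.dist_map]
  · intro hz
    refine ⟨σ.toFun z, ?_, σ.invol z⟩
    rwa [Metric.mem_ball, ← σ.dist_map, σ.invol]

noncomputable def im (x : X) : X := ((2 * Complex.I)⁻¹ : ℂ) • (x - σ.toFun x)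

theorem norm_im (x : X) : ‖σ.im x‖ = ‖x - σ.toFun x‖ / 2 := by
  simp [im, norm_smul, div_eq_inv_mul]

theorem im_sub (x y : X) : σ.im (x - y) = σ.im x - σ.im y := by
  simp only [im, ← smul_sub, σ.map_sub]
  congr 1
  abel

theorem im_map (x : X) : σ.im (σ.toFun x) = -σ.im x := by
  simp only [im, σ.invol, ← smul_neg, neg_sub]

theorem im_ofReal_smul (c : ℝ) (x : X) : σ.im ((c : ℂ) • x) = c • σ.im x := by
  rw [im, σ.map_ofReal_smul, ← smul_sub, smul_comm, Complex.coe_smul, im]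

theorem norm_im_le (x : X) : ‖σ.im x‖ ≤ ‖x‖ := by
  rw [norm_im]
  linarith [norm_sub_le x (σ.toFun x), σ.isom x]

theorem norm_im_sub_norm_le (x y : X) : ‖σ.im y‖ - ‖y - x‖ ≤ ‖σ.im x‖ := by
  have := norm_sub_norm_le (σ.im y) (σ.im x)
  rw [← im_sub] at this
  linarith [σ.norm_im_le (y - x)]

theorem lt_norm_im_of_closure_ball_inter_eq_empty {a : X} {r : ℝ} (hr : 0 < r)
    (hdisj : closure (Metric.ball a r) ∩ closure (σ.toFun '' Metric.ball a r) = ∅) :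
    r < ‖σ.im a‖ := by
  by_contra! h
  have hdist : dist a (σ.toFun a) / 2 ≤ r := by rwa [dist_eq_norm, ← norm_im]
  have hm : midpoint ℝ a (σ.toFun a) ∈
      closure (Metric.ball a r) ∩ closure (σ.toFun '' Metric.ball a r) := by
    rw [σ.image_ball, closure_ball _ hr.ne', closure_ball _ hr.ne', Set.mem_inter_iff]
    constructor
    · rw [Metric.mem_closedBall, dist_midpoint_left]
      simpa [div_eq_inv_mul] using hdist
    · rw [Metric.mem_closedBall, dist_midpoint_right]
      simpa [div_eq_inv_mul] using hdist
  simp [hdisj] at hm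

theorem norm_im_sub_le_norm_im_of_mem {a x : X} {r : ℝ}
    (hx : x ∈ Metric.ball a r ∪ σ.toFun '' Metric.ball a r) : ‖σ.im a‖ - r ≤ ‖σ.im x‖ := by
  have key : ∀ y ∈ Metric.ball a r, ‖σ.im a‖ - r ≤ ‖σ.im y‖ := fun y hy => by
    rw [Metric.mem_ball, dist_eq_norm, ← norm_neg, neg_sub] at hy
    linarith [σ.norm_im_sub_norm_le y a]
  rcases hx with hx | ⟨y, hy, rfl⟩
  · exact key x hx
  · rw [im_map, norm_neg]
    exact key y hy

end Conjugation

theorem stmt15_general {X : Type*} [NormedAddCommGroup X] [NormedSpace ℂ X]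
    (σ : Conjugation X) (a : X) (r K : ℝ) (hr : 0 < r) (hK : 0 < K)
    (hdisj : closure (Metric.ball a r) ∩ closure (σ.toFun '' Metric.ball a r) = ∅)
    (u : X → ℝ)
    (hu : LipschitzOnWith (Real.toNNReal K) u
      (Metric.ball a r ∪ σ.toFun '' Metric.ball a r)) :
    ‖((2 * Complex.I)⁻¹ : ℂ) • (a - σ.toFun a)‖ > r ∧
    (∀ x : X,
      (((|u a| + |u (σ.toFun a)| + K * r) /
          (‖((2 * Complex.I)⁻¹ : ℂ) • (a - σ.toFun a)‖ - r) : ℝ) : ℂ) • σ.toFun x =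
        σ.toFun ((((|u a| + |u (σ.toFun a)| + K * r) /
          (‖((2 * Complex.I)⁻¹ : ℂ) • (a - σ.toFun a)‖ - r) : ℝ) : ℂ) • x)) ∧
    (∀ x ∈ Metric.ball a r ∪ σ.toFun '' Metric.ball a r,
      u x ≤ ‖((2 * Complex.I)⁻¹ : ℂ) •
        (((((|u a| + |u (σ.toFun a)| + K * r) /
            (‖((2 * Complex.I)⁻¹ : ℂ) • (a - σ.toFun a)‖ - r) : ℝ) : ℂ) • x) -
         σ.toFun ((((|u a| + |u (σ.toFun a)| + K * r) /
            (‖((2 * Complex.I)⁻¹ : ℂ) • (a - σ.toFun a)‖ - r) : ℝ) : ℂ) • x))‖) := by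
  have hd : r < ‖σ.im a‖ := σ.lt_norm_im_of_closure_ball_inter_eq_empty hr hdisj
  set N := |u a| + |u (σ.toFun a)| + K * r
  set c := N / (‖σ.im a‖ - r)
  have hc : 0 ≤ c := div_nonneg (by positivity) (sub_pos.2 hd).le
  refine ⟨hd, fun x => (σ.map_ofReal_smul c x).symm, fun x hx => ?_⟩
  change u x ≤ ‖σ.im ((c : ℂ) • x)‖
  rw [σ.im_ofReal_smul, norm_smul, Real.norm_of_nonneg hc]
  rw [σ.image_ball] at hu
  calc u x ≤ N := by
        simpa [Real.coe_toNNReal K hK.le] using hu.le_abs_add_abs_add_mul hr (σ.image_ball a r ▸ hx)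
    _ = c * (‖σ.im a‖ - r) := (div_mul_cancel₀ N (sub_pos.2 hd).ne').symm
    _ ≤ c * ‖σ.im x‖ := by gcongr; exact σ.norm_im_sub_le_norm_im_of_mem hx

/-- Domination on a ball disjoint from its conjugate: with
    `c = (|u(a)| + |u(conj a)| + Kr)/(‖Im a‖ - r)` and `f(x) = c x`, one has
    `‖Im a‖ > r`, `f` is of real type, and `u ≤ ‖Im f‖` on `B ∪ conj(B)`.
    Here `Im x = (x - conj x)/(2i)`. -/
theorem stmt15 {X : Type*} [NormedAddCommGroup X] [NormedSpace ℂ X] [CompleteSpace X]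
    (σ : Conjugation X) (a : X) (r K : ℝ) (hr : 0 < r) (hK : 0 < K)
    (hdisj : closure (Metric.ball a r) ∩ closure (σ.toFun '' Metric.ball a r) = ∅)
    (u : X → ℝ)
    (hu : LipschitzOnWith (Real.toNNReal K) u
      (Metric.ball a r ∪ σ.toFun '' Metric.ball a r))
    (huneg : ∀ x ∈ Metric.ball a r ∪ σ.toFun '' Metric.ball a r,
      σ.toFun x = x → u x ≤ 0) :
    ‖((2 * Complex.I)⁻¹ : ℂ) • (a - σ.toFun a)‖ > r ∧
    (∀ x : X,
      (((|u a| + |u (σ.toFun a)| + K * r) /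
          (‖((2 * Complex.I)⁻¹ : ℂ) • (a - σ.toFun a)‖ - r) : ℝ) : ℂ) • σ.toFun x =
        σ.toFun ((((|u a| + |u (σ.toFun a)| + K * r) /
          (‖((2 * Complex.I)⁻¹ : ℂ) • (a - σ.toFun a)‖ - r) : ℝ) : ℂ) • x)) ∧
    (∀ x ∈ Metric.ball a r ∪ σ.toFun '' Metric.ball a r,
      u x ≤ ‖((2 * Complex.I)⁻¹ : ℂ) •
        (((((|u a| + |u (σ.toFun a)| + K * r) /
            (‖((2 * Complex.I)⁻¹ : ℂ) • (a - σ.toFun a)‖ - r) : ℝ) : ℂ) • x) -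
         σ.toFun ((((|u a| + |u (σ.toFun a)| + K * r) /
            (‖((2 * Complex.I)⁻¹ : ℂ) • (a - σ.toFun a)‖ - r) : ℝ) : ℂ) • x))‖) :=
  stmt15_general σ a r K hr hK hdisj u hu
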